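/- arXiv:2203.06564 — 10 statements merged into one kernel-verified Lean document; each statement's English description precedes it below -/
import Mathlib

section
/- If K is a subsemiheap of the extended bicyclic semigroup containing a_{αβ} and a_{γδ} with γ ≥ α and δ ≥ β, then K also contains a_{α+δ-β, β+γ-α}, a_{α+δ-β, δ}, and a_{γ, β+γ-α}; moreover if γ-α ≤ δ-β then a_{γ, δ+(δ-β)-(γ-α)} ∈ K, and if γ-α ≥ δ-β then a_{γ+(γ-α)-(δ-β), δ} ∈ K. -/
/-! Each of the five elements is a triple product of `x = a_{αβ}` and `y = a_{γδ}`, namely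
`x y* x`, `x y* y`, `y y* x` and `y x* y`; the order hypotheses decide which argument each
`min` in the two products picks. -/

/-- The extended bicyclic semigroup: pairs of integers with this product. -/
def emul (a b : ℤ × ℤ) : ℤ × ℤ :=
  (a.1 + b.1 - min a.2 b.1, a.2 + b.2 - min a.2 b.1)

/-- The involution (i,j)* = (j,i). -/
def estar (a : ℤ × ℤ) : ℤ × ℤ := (a.2, a.1)

/-- The triple product x y* z. -/
def tri (x y z : ℤ × ℤ) : ℤ × ℤ := emul (emul x (estar y)) z

/-- A subsemiheap: a subset closed under the triple product x y* z. -/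
def IsSubsemiheap (K : Set (ℤ × ℤ)) : Prop :=
  ∀ x ∈ K, ∀ y ∈ K, ∀ z ∈ K, tri x y z ∈ K

theorem estar_mk (a b : ℤ) : estar (a, b) = (b, a) := rfl

theorem emul_of_le {a b c d : ℤ} (h : b ≤ c) : emul (a, b) (c, d) = (a + c - b, d) := by
  simp only [emul, min_eq_left h, add_sub_cancel_left]

theorem emul_of_ge {a b c d : ℤ} (h : c ≤ b) : emul (a, b) (c, d) = (a, b + d - c) := by
  simp only [emul, min_eq_right h, add_sub_cancel_right]

theorem IsSubsemiheap.mem_of_tri_eq {K : Set (ℤ × ℤ)} (hK : IsSubsemiheap K) {x y z w : ℤ × ℤ}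
    (hx : x ∈ K) (hy : y ∈ K) (hz : z ∈ K) (h : tri x y z = w) : w ∈ K :=
  h ▸ hK x hx y hy z hz

theorem stmt4 (K : Set (ℤ × ℤ)) (hK : IsSubsemiheap K)
    (α β γ δ : ℤ) (h1 : ((α, β) : ℤ × ℤ) ∈ K) (h2 : ((γ, δ) : ℤ × ℤ) ∈ K)
    (hγ : γ ≥ α) (hδ : δ ≥ β) :
    ((α + δ - β, β + γ - α) : ℤ × ℤ) ∈ K ∧
    ((α + δ - β, δ) : ℤ × ℤ) ∈ K ∧
    ((γ, β + γ - α) : ℤ × ℤ) ∈ K ∧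
    (γ - α ≤ δ - β → ((γ, δ + (δ - β) - (γ - α)) : ℤ × ℤ) ∈ K) ∧
    (γ - α ≥ δ - β → ((γ + (γ - α) - (δ - β), δ) : ℤ × ℤ) ∈ K) := by
  refine ⟨hK.mem_of_tri_eq h1 h2 h1 ?xyx, hK.mem_of_tri_eq h1 h2 h2 ?xyy,
    hK.mem_of_tri_eq h2 h2 h1 ?yyx, fun hle => hK.mem_of_tri_eq h2 h1 h2 ?yxy_le,
    fun hge => hK.mem_of_tri_eq h2 h1 h2 ?yxy_ge⟩
  case xyx =>
    rw [tri, estar_mk, emul_of_le hδ, emul_of_ge hγ]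
    congr 1; ring
  case xyy =>
    rw [tri, estar_mk, emul_of_le hδ, emul_of_le le_rfl]
    congr 1; ring
  case yyx =>
    rw [tri, estar_mk, emul_of_le le_rfl, emul_of_ge hγ]
    congr 1 <;> ring
  case yxy_le =>
    rw [tri, estar_mk, emul_of_ge hδ, emul_of_ge (by linarith)]
    congr 1; ring
  case yxy_ge =>
    rw [tri, estar_mk, emul_of_ge hδ, emul_of_le (by linarith)]
    congr 1; ring
end

section
/- If K is a subsemiheap of the extended bicyclic semigroup containing a_{αβ} and a_{γδ} with γ ≥ α and δ ≤ β, then K also contains a_{α, β+(γ-α)+(β-δ)}, a_{γ+β-δ, β}, a_{γ, β+γ-α}, and a_{γ+(β-δ)+(γ-α), δ}. -/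
/-
Each of the four elements is a triple product of a_{αβ} and a_{γδ}:
a_{αβ} a_{γδ}* a_{αβ}, a_{γδ} a_{αβ}* a_{αβ}, a_{γδ} a_{γδ}* a_{αβ} and a_{γδ} a_{αβ}* a_{γδ}.
Under γ ≥ α and δ ≤ β every product occurring in them has its minimum attained on a known side.
-/

theorem emul_of_le_s5 {i j p q : ℤ} (h : j ≤ p) : emul (i, j) (p, q) = (i + p - j, q) := by
  rw [emul, min_eq_left h]
  congr 1; ring

theorem emul_of_ge_s5 {i j p q : ℤ} (h : p ≤ j) : emul (i, j) (p, q) = (i, j + q - p) := by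
  rw [emul, min_eq_right h]
  congr 1; ring

theorem stmt5 (K : Set (ℤ × ℤ)) (hK : IsSubsemiheap K)
    (α β γ δ : ℤ) (h1 : ((α, β) : ℤ × ℤ) ∈ K) (h2 : ((γ, δ) : ℤ × ℤ) ∈ K)
    (hγ : γ ≥ α) (hδ : δ ≤ β) :
    ((α, β + (γ - α) + (β - δ)) : ℤ × ℤ) ∈ K ∧
    ((γ + β - δ, β) : ℤ × ℤ) ∈ K ∧
    ((γ, β + γ - α) : ℤ × ℤ) ∈ K ∧
    ((γ + (β - δ) + (γ - α), δ) : ℤ × ℤ) ∈ K := by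
  refine ⟨hK.mem_of_tri_eq h1 h2 h1 ?_, hK.mem_of_tri_eq h2 h1 h1 ?_,
    hK.mem_of_tri_eq h2 h2 h1 ?_, hK.mem_of_tri_eq h2 h1 h2 ?_⟩
  · rw [tri, estar, emul_of_ge_s5 hδ, emul_of_ge_s5 (by omega)]
    congr 1; ring
  · rw [tri, estar, emul_of_le_s5 hδ, emul_of_le_s5 le_rfl]
    congr 1; ring
  · rw [tri, estar, emul_of_le_s5 le_rfl, emul_of_ge_s5 hγ]
    congr 1 <;> ring
  · rw [tri, estar, emul_of_le_s5 hδ, emul_of_le_s5 hγ]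
    congr 1; ring
end

section
/- For any α, β ∈ ℤ and any subset J ⊆ ℕ₀, the set D_{α,β}(J) = { a_{α+j, β+j} : j ∈ J } is a subsemiheap of the extended bicyclic semigroup. -/
theorem emul_shift (i j k a b : ℤ) :
    emul (i + a, j + a) (j + b, k + b) = (i + max a b, k + max a b) := by
  simp only [emul, min_add_add_left, Prod.mk.injEq]
  constructor <;> linarith [min_add_max a b]

theorem tri_shift (α β a b c : ℤ) :
    tri (α + a, β + a) (α + b, β + b) (α + c, β + c) =
      (α + max (max a b) c, β + max (max a b) c) := by
  rw [tri, estar, emul_shift, emul_shift]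

theorem stmt6 (α β : ℤ) (J : Set ℕ) :
    IsSubsemiheap {x : ℤ × ℤ | ∃ j ∈ J, x = (α + (j : ℤ), β + (j : ℤ))} := by
  rintro x ⟨j, hj, rfl⟩ y ⟨k, hk, rfl⟩ z ⟨l, hl, rfl⟩
  have hmax : max (max j k) l ∈ J := max_rec' (· ∈ J) (max_rec' (· ∈ J) hj hk) hl
  exact ⟨max (max j k) l, hmax, by rw [tri_shift]; push_cast; rfl⟩
end

section
/- For any α, β ∈ ℤ and any σ ∈ ℕ with σ ≥ 1, the set K_{α,β}^σ = { a_{α+ℓσ, β+mσ} : ℓ, m ∈ ℕ₀ } is a subsemiheap of the extended bicyclic semigroup. -/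
def affineScale (a b σ : ℤ) (x : ℤ × ℤ) : ℤ × ℤ :=
  (a + x.1 * σ, b + x.2 * σ)

section AffineScale

variable {a b c σ : ℤ}

theorem emul_affineScale (hσ : 0 ≤ σ) (x y : ℤ × ℤ) :
    emul (affineScale a c σ x) (affineScale c b σ y) = affineScale a b σ (emul x y) := by
  have hmin : min (c + x.2 * σ) (c + y.1 * σ) = c + min x.2 y.1 * σ := by
    rw [min_add_add_left, min_mul_of_nonneg _ _ hσ]
  simp only [emul, affineScale, hmin, Prod.mk.injEq]
  constructor <;> ring

theorem estar_affineScale (x : ℤ × ℤ) :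
    estar (affineScale a b σ x) = affineScale b a σ (estar x) := rfl

theorem tri_affineScale (hσ : 0 ≤ σ) (x y z : ℤ × ℤ) :
    tri (affineScale a b σ x) (affineScale a b σ y) (affineScale a b σ z) =
      affineScale a b σ (tri x y z) := by
  rw [tri, estar_affineScale, emul_affineScale hσ, emul_affineScale hσ, tri]

end AffineScale

theorem IsSubsemiheap.image {K : Set (ℤ × ℤ)} (hK : IsSubsemiheap K) {f : ℤ × ℤ → ℤ × ℤ}
    (hf : ∀ x y z, tri (f x) (f y) (f z) = f (tri x y z)) : IsSubsemiheap (f '' K) := by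
  rintro _ ⟨x, hx, rfl⟩ _ ⟨y, hy, rfl⟩ _ ⟨z, hz, rfl⟩
  exact ⟨tri x y z, hK x hx y hy z hz, (hf x y z).symm⟩

theorem emul_nonneg {x y : ℤ × ℤ} (hx : 0 ≤ x) (hy : 0 ≤ y) : 0 ≤ emul x y := by
  obtain ⟨hx₁, hx₂⟩ : 0 ≤ x.1 ∧ 0 ≤ x.2 := hx
  obtain ⟨hy₁, hy₂⟩ : 0 ≤ y.1 ∧ 0 ≤ y.2 := hy
  show 0 ≤ x.1 + y.1 - min x.2 y.1 ∧ 0 ≤ x.2 + y.2 - min x.2 y.1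
  constructor
  · linarith [min_le_right x.2 y.1]
  · linarith [min_le_left x.2 y.1]

theorem isSubsemiheap_nonneg : IsSubsemiheap {x : ℤ × ℤ | 0 ≤ x} := fun _ hx _ hy _ hz =>
  emul_nonneg (emul_nonneg hx ⟨hy.2, hy.1⟩) hz

theorem image_affineScale_nonneg (a b σ : ℤ) :
    affineScale a b σ '' {x | 0 ≤ x} = {x | ∃ l m : ℕ, x = (a + (l : ℤ) * σ, b + (m : ℤ) * σ)} := by
  ext x
  constructor
  · rintro ⟨p, hp, rfl⟩
    refine ⟨p.1.toNat, p.2.toNat, ?_⟩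
    rw [Int.toNat_of_nonneg hp.1, Int.toNat_of_nonneg hp.2, affineScale]
  · rintro ⟨l, m, rfl⟩
    exact ⟨((l : ℤ), (m : ℤ)), ⟨l.cast_nonneg, m.cast_nonneg⟩, rfl⟩

theorem stmt7_general (α β : ℤ) (σ : ℕ) :
    IsSubsemiheap {x : ℤ × ℤ | ∃ l m : ℕ, x = (α + (l : ℤ) * σ, β + (m : ℤ) * σ)} := by
  rw [← image_affineScale_nonneg]
  exact isSubsemiheap_nonneg.image (tri_affineScale σ.cast_nonneg)

theorem stmt7 (α β : ℤ) (σ : ℕ) (hσ : 1 ≤ σ) :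
    IsSubsemiheap {x : ℤ × ℤ | ∃ l m : ℕ, x = (α + (l : ℤ) * σ, β + (m : ℤ) * σ)} :=
  stmt7_general α β σ
end

section
/- For any α, β ∈ ℤ, the set K_{α,β} = { a_{pq} : p ≥ α, q ≥ β } is a subsemiheap of the extended bicyclic semigroup, and it equals a_{αα} E a_{ββ} = a_{αα}E ∩ Ea_{ββ}. -/
/-! A product `x y` has first coordinate at least `x.1` and second coordinate at least `y.2`,
while the idempotent `(α, α)` fixes on the left exactly the pairs with first coordinate at least
`α` (dually for `(β, β)` on the right). Hence the quadrant `{(p, q) | α ≤ p, β ≤ q}` contains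
`x y* z` as soon as it contains `x` and `z`, and it is cut out by the one-sided ideals `(α, α) E`
and `E (β, β)`. -/

theorem fst_le_fst_emul (x y : ℤ × ℤ) : x.1 ≤ (emul x y).1 := by
  simp only [emul]
  omega

theorem snd_le_snd_emul (x y : ℤ × ℤ) : y.2 ≤ (emul x y).2 := by
  simp only [emul]
  omega

theorem emul_diag_left_of_le {α : ℤ} {x : ℤ × ℤ} (h : α ≤ x.1) : emul (α, α) x = x := by
  simp only [emul, min_eq_left h]
  ext <;> simp

theorem emul_diag_right_of_le {β : ℤ} {x : ℤ × ℤ} (h : β ≤ x.2) : emul x (β, β) = x := by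
  simp only [emul, min_eq_right h]
  ext <;> simp

theorem fst_le_fst_tri (x y z : ℤ × ℤ) : x.1 ≤ (tri x y z).1 :=
  (fst_le_fst_emul x (estar y)).trans (fst_le_fst_emul _ z)

theorem snd_le_snd_tri (x y z : ℤ × ℤ) : z.2 ≤ (tri x y z).2 :=
  snd_le_snd_emul _ z

theorem exists_eq_emul_diag_left_iff (α : ℤ) (y : ℤ × ℤ) :
    (∃ x, y = emul (α, α) x) ↔ α ≤ y.1 :=
  ⟨fun ⟨x, hx⟩ => hx ▸ fst_le_fst_emul (α, α) x,
    fun h => ⟨y, (emul_diag_left_of_le h).symm⟩⟩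

theorem exists_eq_emul_diag_right_iff (β : ℤ) (y : ℤ × ℤ) :
    (∃ x, y = emul x (β, β)) ↔ β ≤ y.2 :=
  ⟨fun ⟨x, hx⟩ => hx ▸ snd_le_snd_emul x (β, β),
    fun h => ⟨y, (emul_diag_right_of_le h).symm⟩⟩

theorem exists_eq_emul_diag_left_right_iff (α β : ℤ) (y : ℤ × ℤ) :
    (∃ x, y = emul (emul (α, α) x) (β, β)) ↔ α ≤ y.1 ∧ β ≤ y.2 := by
  constructor
  · rintro ⟨x, rfl⟩
    exact ⟨(fst_le_fst_emul _ x).trans (fst_le_fst_emul _ _), snd_le_snd_emul _ _⟩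
  · rintro ⟨hα, hβ⟩
    exact ⟨y, by rw [emul_diag_left_of_le hα, emul_diag_right_of_le hβ]⟩

theorem stmt8 (α β : ℤ) :
    IsSubsemiheap {x : ℤ × ℤ | α ≤ x.1 ∧ β ≤ x.2} ∧
    {x : ℤ × ℤ | α ≤ x.1 ∧ β ≤ x.2}
      = {y : ℤ × ℤ | ∃ x : ℤ × ℤ, y = emul (emul (α, α) x) (β, β)} ∧
    {x : ℤ × ℤ | α ≤ x.1 ∧ β ≤ x.2}
      = {y : ℤ × ℤ | ∃ x : ℤ × ℤ, y = emul (α, α) x} ∩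
        {y : ℤ × ℤ | ∃ x : ℤ × ℤ, y = emul x (β, β)} := by
  refine ⟨?_, ?_, ?_⟩
  · intro x hx y _ z hz
    exact ⟨hx.1.trans (fst_le_fst_tri x y z), hz.2.trans (snd_le_snd_tri x y z)⟩
  · ext y
    exact (exists_eq_emul_diag_left_right_iff α β y).symm
  · ext y
    simp only [Set.mem_inter_iff, Set.mem_ofPred_eq, exists_eq_emul_diag_left_iff,
      exists_eq_emul_diag_right_iff]
end

section
/- Let α₀, β₀ ∈ ℤ, ℓ₀, σ ∈ ℕ, and 0 < k₁ < k₂ < ⋯ < k_{ℓ₀}. Then the set K = {a_{α₀β₀}} ∪ { a_{α₀+k_j, β₀+k_j} : 1 ≤ j ≤ ℓ₀-1 } ∪ { a_{α₀+k_{ℓ₀}+mσ, β₀+k_{ℓ₀}+nσ} : m, n ∈ ℕ₀ } is a subsemiheap of the extended bicyclic semigroup. -/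
/-! Translation by `(α₀, β₀)` is an automorphism of the triple product, so it suffices to treat
`α₀ = β₀ = 0`. The set is then the union of a grid `S = {(c + mσ, c + nσ)}`, `c = k l₀`, and
diagonal points `(s, s)` with `s ≤ c`. The grid is closed under product and involution, the
diagonal points are idempotents with `(s, s)(t, t) = (max s t, max s t)`, and each of them acts
as a two-sided identity on `S` because `s` lies below every coordinate of `S`. Hence the union is
closed under product and involution, and so under `x y* z`. -/

lemma emul_of_le_s9 {x y : ℤ × ℤ} (h : x.2 ≤ y.1) : emul x y = (x.1 + y.1 - x.2, y.2) := by
  simp only [emul, min_eq_left h, add_sub_cancel_left]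

lemma emul_of_ge_s9 {x y : ℤ × ℤ} (h : y.1 ≤ x.2) : emul x y = (x.1, x.2 + y.2 - y.1) := by
  simp only [emul, min_eq_right h, add_sub_cancel_right]

lemma tri_add (x y z v : ℤ × ℤ) : tri (x + v) (y + v) (z + v) = tri x y z + v := by
  refine Prod.ext ?_ ?_ <;> simp only [tri, emul, estar, Prod.fst_add, Prod.snd_add] <;> omega

lemma IsSubsemiheap.image_add_right {K : Set (ℤ × ℤ)} (hK : IsSubsemiheap K) (v : ℤ × ℤ) :
    IsSubsemiheap ((· + v) '' K) := by
  rintro _ ⟨x, hx, rfl⟩ _ ⟨y, hy, rfl⟩ _ ⟨z, hz, rfl⟩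
  exact ⟨tri x y z, hK x hx y hy z hz, (tri_add x y z v).symm⟩

def IsStarSubsemigroup (K : Set (ℤ × ℤ)) : Prop :=
  (∀ x ∈ K, ∀ y ∈ K, emul x y ∈ K) ∧ ∀ x ∈ K, estar x ∈ K

lemma IsStarSubsemigroup.isSubsemiheap {K : Set (ℤ × ℤ)} (hK : IsStarSubsemigroup K) :
    IsSubsemiheap K :=
  fun x hx y hy z hz => hK.1 _ (hK.1 x hx _ (hK.2 y hy)) z hz

def diagSet (D : Set ℤ) : Set (ℤ × ℤ) := (fun s => (s, s)) '' D

def gridSet (c : ℤ) (σ : ℕ) : Set (ℤ × ℤ) := {x | ∃ m n : ℕ, x = (c + m * σ, c + n * σ)}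

lemma emul_diag_diag (s t : ℤ) : emul (s, s) (t, t) = (max s t, max s t) := by
  simp only [emul, Prod.mk.injEq]; omega

lemma emul_diag_left {s : ℤ} {x : ℤ × ℤ} (h : s ≤ x.1) : emul (s, s) x = x := by
  rw [emul_of_le_s9 h]; simp

lemma emul_diag_right {s : ℤ} {x : ℤ × ℤ} (h : s ≤ x.2) : emul x (s, s) = x := by
  rw [emul_of_ge_s9 h]; simp

lemma isStarSubsemigroup_diagSet_union {D : Set ℤ} {S : Set (ℤ × ℤ)} {c : ℤ}
    (hD : ∀ s ∈ D, s ≤ c) (hS : IsStarSubsemigroup S) (hSc : ∀ x ∈ S, c ≤ x.1 ∧ c ≤ x.2) :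
    IsStarSubsemigroup (diagSet D ∪ S) := by
  refine ⟨?_, ?_⟩
  · rintro _ (⟨s, hs, rfl⟩ | hx) _ (⟨t, ht, rfl⟩ | hy)
    · refine Or.inl ⟨max s t, ?_, (emul_diag_diag s t).symm⟩
      rcases max_choice s t with h | h <;> rw [h] <;> assumption
    · rw [emul_diag_left ((hD s hs).trans (hSc _ hy).1)]; exact Or.inr hy
    · rw [emul_diag_right ((hD t ht).trans (hSc _ hx).2)]; exact Or.inr hx
    · exact Or.inr (hS.1 _ hx _ hy)
  · rintro _ (⟨s, hs, rfl⟩ | hx)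
    · exact Or.inl ⟨s, hs, rfl⟩
    · exact Or.inr (hS.2 _ hx)

lemma le_of_mem_gridSet {c : ℤ} {σ : ℕ} {x : ℤ × ℤ} (hx : x ∈ gridSet c σ) :
    c ≤ x.1 ∧ c ≤ x.2 := by
  obtain ⟨m, n, rfl⟩ := hx
  constructor <;> simp only [le_add_iff_nonneg_right] <;> positivity

lemma isStarSubsemigroup_gridSet (c : ℤ) (σ : ℕ) : IsStarSubsemigroup (gridSet c σ) := by
  refine ⟨?_, ?_⟩
  · rintro _ ⟨m, n, rfl⟩ _ ⟨p, q, rfl⟩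
    rcases le_total n p with h | h
    · rw [emul_of_le_s9 (by dsimp only; gcongr)]
      exact ⟨m + (p - n), q, by push_cast [Nat.cast_sub h]; ring_nf⟩
    · rw [emul_of_ge_s9 (by dsimp only; gcongr)]
      exact ⟨m, n - p + q, by push_cast [Nat.cast_sub h]; ring_nf⟩
  · rintro _ ⟨m, n, rfl⟩
    exact ⟨n, m, rfl⟩

theorem stmt9_general (α₀ β₀ : ℤ) (l₀ σ : ℕ) (hl₀ : 1 ≤ l₀)
    (k : ℕ → ℤ) (hk1 : 0 < k 1)
    (hkmono : ∀ j : ℕ, 1 ≤ j → j < l₀ → k j < k (j + 1)) :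
    IsSubsemiheap
      ({((α₀, β₀) : ℤ × ℤ)} ∪
       {x : ℤ × ℤ | ∃ j : ℕ, 1 ≤ j ∧ j ≤ l₀ - 1 ∧ x = (α₀ + k j, β₀ + k j)} ∪
       {x : ℤ × ℤ | ∃ m n : ℕ,
          x = (α₀ + k l₀ + (m : ℤ) * σ, β₀ + k l₀ + (n : ℤ) * σ)}) := by
  have hmono : MonotoneOn k (Set.Icc 1 l₀) :=
    (strictMonoOn_of_lt_add_one Set.ordConnected_Icc fun j _ hj hj1 =>
      hkmono j hj.1 (Nat.add_one_le_iff.1 hj1.2)).monotoneOn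
  have hl₀_mem : l₀ ∈ Set.Icc 1 l₀ := ⟨hl₀, le_rfl⟩
  set D : Set ℤ := insert 0 (k '' Set.Icc 1 (l₀ - 1))
  have hD : ∀ s ∈ D, s ≤ k l₀ := by
    rintro s (rfl | ⟨j, hj, rfl⟩)
    · exact hk1.le.trans (hmono ⟨le_rfl, hl₀⟩ hl₀_mem hl₀)
    · have hjl : j ≤ l₀ := hj.2.trans (Nat.sub_le l₀ 1)
      exact hmono ⟨hj.1, hjl⟩ hl₀_mem hjl
  suffices IsSubsemiheap ((· + (α₀, β₀)) '' (diagSet D ∪ gridSet (k l₀) σ)) by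
    convert this using 1
    ext ⟨a, b⟩
    simp [D, diagSet, gridSet, Prod.ext_iff, ← sub_eq_add_neg, sub_eq_iff_eq_add,
      eq_sub_iff_add_eq, add_comm, eq_comm, add_assoc, and_assoc]
  exact ((isStarSubsemigroup_diagSet_union hD (isStarSubsemigroup_gridSet _ σ)
    fun _ => le_of_mem_gridSet).isSubsemiheap).image_add_right _

theorem stmt9 (α₀ β₀ : ℤ) (l₀ σ : ℕ) (hl₀ : 1 ≤ l₀) (hσ : 1 ≤ σ)
    (k : ℕ → ℤ) (hk1 : 0 < k 1)
    (hkmono : ∀ j : ℕ, 1 ≤ j → j < l₀ → k j < k (j + 1)) :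
    IsSubsemiheap
      ({((α₀, β₀) : ℤ × ℤ)} ∪
       {x : ℤ × ℤ | ∃ j : ℕ, 1 ≤ j ∧ j ≤ l₀ - 1 ∧ x = (α₀ + k j, β₀ + k j)} ∪
       {x : ℤ × ℤ | ∃ m n : ℕ,
          x = (α₀ + k l₀ + (m : ℤ) * σ, β₀ + k l₀ + (n : ℤ) * σ)}) :=
  stmt9_general α₀ β₀ l₀ σ hl₀ k hk1 hkmono
end

section
/- Let p ∈ ℕ with p ≥ 1 and A ⊆ {0, 1, …, p-1}. Then K = { (k+ℓp, k+mp) : k ∈ A, ℓ, m ∈ ℕ₀ } is a subsemiheap of the extended bicyclic semigroup; in fact K is closed under the binary product as well, so it is a sub-inverse semigroup. -/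
def sameResidueSet (p : ℕ) (A : Set ℕ) : Set (ℤ × ℤ) :=
  {x | ∃ k ∈ A, ∃ l m : ℕ, x = ((k : ℤ) + (l : ℤ) * p, (k : ℤ) + (m : ℤ) * p)}

lemma emul_of_snd_le_fst {a b : ℤ × ℤ} (h : a.2 ≤ b.1) :
    emul a b = (a.1 + b.1 - a.2, b.2) := by
  simp only [emul, min_eq_left h, add_sub_cancel_left]

lemma emul_of_fst_le_snd {a b : ℤ × ℤ} (h : b.1 ≤ a.2) :
    emul a b = (a.1, a.2 + b.2 - b.1) := by
  simp only [emul, min_eq_right h, add_sub_cancel_right]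

lemma Int.add_mul_ediv_of_nonneg_of_lt {k p : ℤ} (m : ℤ) (hk : 0 ≤ k) (hkp : k < p) :
    (k + m * p) / p = m := by
  rw [Int.add_mul_ediv_right _ _ (by omega), Int.ediv_eq_zero_of_lt hk hkp, zero_add]

lemma Int.le_of_add_mul_le_add_mul {k k' p m l : ℤ} (hk : 0 ≤ k) (hkp : k < p)
    (hk' : 0 ≤ k') (hk'p : k' < p) (h : k + m * p ≤ k' + l * p) : m ≤ l := by
  simpa only [Int.add_mul_ediv_of_nonneg_of_lt _ hk hkp,
    Int.add_mul_ediv_of_nonneg_of_lt _ hk' hk'p] using Int.ediv_le_ediv (hk.trans_lt hkp) h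

namespace sameResidueSet

variable {p : ℕ} {A : Set ℕ}

lemma mk_mem {k : ℕ} (hk : k ∈ A) {l m : ℤ} (hl : 0 ≤ l) (hm : 0 ≤ m) :
    ((k : ℤ) + l * p, (k : ℤ) + m * p) ∈ sameResidueSet p A :=
  ⟨k, hk, l.toNat, m.toNat, by rw [Int.toNat_of_nonneg hl, Int.toNat_of_nonneg hm]⟩

lemma estar_mem {x : ℤ × ℤ} (hx : x ∈ sameResidueSet p A) : estar x ∈ sameResidueSet p A := by
  obtain ⟨k, hk, l, m, rfl⟩ := hx
  exact ⟨k, hk, m, l, rfl⟩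

lemma emul_mem (hA : ∀ k ∈ A, k < p) {x y : ℤ × ℤ} (hx : x ∈ sameResidueSet p A)
    (hy : y ∈ sameResidueSet p A) : emul x y ∈ sameResidueSet p A := by
  obtain ⟨k, hk, l, m, rfl⟩ := hx
  obtain ⟨k', hk', l', m', rfl⟩ := hy
  have hkp : (k : ℤ) < p := by exact_mod_cast hA k hk
  have hk'p : (k' : ℤ) < p := by exact_mod_cast hA k' hk'
  rcases le_total ((k : ℤ) + m * p) ((k' : ℤ) + l' * p) with h | h
  · have hml : (m : ℤ) ≤ l' := Int.le_of_add_mul_le_add_mul (by positivity) hkp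
      (by positivity) hk'p h
    rw [emul_of_snd_le_fst h]
    convert mk_mem hk' (l := l + l' - m) (m := m') (by omega) (by positivity) using 2
    ring
  · have hlm : (l' : ℤ) ≤ m := Int.le_of_add_mul_le_add_mul (by positivity) hk'p
      (by positivity) hkp h
    rw [emul_of_fst_le_snd h]
    convert mk_mem hk (l := l) (m := m + m' - l') (by positivity) (by omega) using 2
    ring

lemma isSubsemiheap (hA : ∀ k ∈ A, k < p) : IsSubsemiheap (sameResidueSet p A) :=
  fun _ hx _ hy _ hz => emul_mem hA (emul_mem hA hx (estar_mem hy)) hz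

end sameResidueSet

theorem stmt10_general (p : ℕ) (A : Set ℕ) (hA : ∀ k ∈ A, k < p) :
    IsSubsemiheap {x : ℤ × ℤ | ∃ k ∈ A, ∃ l m : ℕ,
        x = ((k : ℤ) + (l : ℤ) * p, (k : ℤ) + (m : ℤ) * p)} ∧
    (∀ x ∈ {x : ℤ × ℤ | ∃ k ∈ A, ∃ l m : ℕ,
        x = ((k : ℤ) + (l : ℤ) * p, (k : ℤ) + (m : ℤ) * p)},
     ∀ y ∈ {x : ℤ × ℤ | ∃ k ∈ A, ∃ l m : ℕ,
        x = ((k : ℤ) + (l : ℤ) * p, (k : ℤ) + (m : ℤ) * p)},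
      emul x y ∈ {x : ℤ × ℤ | ∃ k ∈ A, ∃ l m : ℕ,
        x = ((k : ℤ) + (l : ℤ) * p, (k : ℤ) + (m : ℤ) * p)}) ∧
    (∀ x ∈ {x : ℤ × ℤ | ∃ k ∈ A, ∃ l m : ℕ,
        x = ((k : ℤ) + (l : ℤ) * p, (k : ℤ) + (m : ℤ) * p)},
      estar x ∈ {x : ℤ × ℤ | ∃ k ∈ A, ∃ l m : ℕ,
        x = ((k : ℤ) + (l : ℤ) * p, (k : ℤ) + (m : ℤ) * p)}) :=
  ⟨sameResidueSet.isSubsemiheap hA, fun _ hx _ hy => sameResidueSet.emul_mem hA hx hy,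
    fun _ hx => sameResidueSet.estar_mem hx⟩

theorem stmt10 (p : ℕ) (hp : 1 ≤ p) (A : Set ℕ) (hA : ∀ k ∈ A, k < p) :
    IsSubsemiheap {x : ℤ × ℤ | ∃ k ∈ A, ∃ l m : ℕ,
        x = ((k : ℤ) + (l : ℤ) * p, (k : ℤ) + (m : ℤ) * p)} ∧
    (∀ x ∈ {x : ℤ × ℤ | ∃ k ∈ A, ∃ l m : ℕ,
        x = ((k : ℤ) + (l : ℤ) * p, (k : ℤ) + (m : ℤ) * p)},
     ∀ y ∈ {x : ℤ × ℤ | ∃ k ∈ A, ∃ l m : ℕ,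
        x = ((k : ℤ) + (l : ℤ) * p, (k : ℤ) + (m : ℤ) * p)},
      emul x y ∈ {x : ℤ × ℤ | ∃ k ∈ A, ∃ l m : ℕ,
        x = ((k : ℤ) + (l : ℤ) * p, (k : ℤ) + (m : ℤ) * p)}) ∧
    (∀ x ∈ {x : ℤ × ℤ | ∃ k ∈ A, ∃ l m : ℕ,
        x = ((k : ℤ) + (l : ℤ) * p, (k : ℤ) + (m : ℤ) * p)},
      estar x ∈ {x : ℤ × ℤ | ∃ k ∈ A, ∃ l m : ℕ,
        x = ((k : ℤ) + (l : ℤ) * p, (k : ℤ) + (m : ℤ) * p)}) :=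
  stmt10_general p A hA
end

section
/- Let K be a subsemiheap of the extended bicyclic semigroup contained in K_{α₀,β₀} = {a_{pq} : p ≥ α₀, q ≥ β₀} with a_{α₀β₀} ∈ K. If a_{α₀β} ∉ K for all β > β₀ and a_{αβ₀} ∉ K for all α > α₀, and a_{α₀+k,β₀+k} ∉ K for all k ≥ 1, then K = {a_{α₀β₀}}. -/
/-! If `e = (α₀, β₀)` is the least element of `K` in both coordinates, then for `(p, q) ∈ K`
the products `e (p,q)* (p,q)` and `(p,q) (p,q)* e` are the diagonal shifts of `e` by `q - β₀`
and by `p - α₀`; excluding all proper diagonal shifts forces `p = α₀` and `q = β₀`. -/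

lemma tri_self_right {a b : ℤ} (x : ℤ × ℤ) (h : b ≤ x.2) :
    tri (a, b) x x = (a + (x.2 - b), b + (x.2 - b)) := by
  simp only [tri, emul, estar]
  ext <;> simp only [min_def] <;> split_ifs <;> omega

lemma tri_self_left {a b : ℤ} (x : ℤ × ℤ) (h : a ≤ x.1) :
    tri x x (a, b) = (a + (x.1 - a), b + (x.1 - a)) := by
  simp only [tri, emul, estar]
  ext <;> simp only [min_def] <;> split_ifs <;> omega

theorem stmt13_general (K : Set (ℤ × ℤ)) (hK : IsSubsemiheap K) (α₀ β₀ : ℤ)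
    (hsub : K ⊆ {x : ℤ × ℤ | α₀ ≤ x.1 ∧ β₀ ≤ x.2})
    (hmem : ((α₀, β₀) : ℤ × ℤ) ∈ K)
    (hdiag : ∀ k : ℤ, 1 ≤ k → ((α₀ + k, β₀ + k) : ℤ × ℤ) ∉ K) :
    K = {((α₀, β₀) : ℤ × ℤ)} := by
  refine Set.eq_singleton_iff_unique_mem.2 ⟨hmem, fun x hx => ?_⟩
  obtain ⟨hp, hq⟩ := hsub hx
  have hq' : x.2 = β₀ := by
    by_contra hne
    apply hdiag (x.2 - β₀) (by omega)
    simpa only [tri_self_right x hq] using hK _ hmem _ hx _ hx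
  have hp' : x.1 = α₀ := by
    by_contra hne
    apply hdiag (x.1 - α₀) (by omega)
    simpa only [tri_self_left x hp] using hK _ hx _ hx _ hmem
  exact Prod.ext hp' hq'

theorem stmt13 (K : Set (ℤ × ℤ)) (hK : IsSubsemiheap K) (α₀ β₀ : ℤ)
    (hsub : K ⊆ {x : ℤ × ℤ | α₀ ≤ x.1 ∧ β₀ ≤ x.2})
    (hmem : ((α₀, β₀) : ℤ × ℤ) ∈ K)
    (hrow : ∀ β : ℤ, β₀ < β → ((α₀, β) : ℤ × ℤ) ∉ K)
    (hcol : ∀ α : ℤ, α₀ < α → ((α, β₀) : ℤ × ℤ) ∉ K)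
    (hdiag : ∀ k : ℤ, 1 ≤ k → ((α₀ + k, β₀ + k) : ℤ × ℤ) ∉ K) :
    K = {((α₀, β₀) : ℤ × ℤ)} :=
  stmt13_general K hK α₀ β₀ hsub hmem hdiag
end

section
/- Let K be a subsemiheap of the extended bicyclic semigroup with a_{α₀β₀} ∈ K ⊆ K_{α₀,β₀}, and suppose a_{α₀β₀} and finitely many points a_{α₀+k_j, β₀+k_j} (1 ≤ j ≤ n₀, with 1 ≤ k₁ < ⋯ < k_{n₀}) are the only elements of K on the diagonal {a_{α₀+k, β₀+k} : k ≥ 0}, and a_{α₀β} ∉ K for β > β₀ and a_{αβ₀} ∉ K for α > α₀. Then K = {a_{α₀β₀}} ∪ {a_{α₀+k_j, β₀+k_j} : 1 ≤ j ≤ n₀}, i.e. K contains no off-diagonal elements. -/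
/-!
Write elements of `K` as `(α₀ + p, β₀ + q)` with `p, q ≥ 0`, and let `e = (α₀, β₀)`. The
semiheap operations `e x* e` and `x x* e` send such an element to its mirror image
`(α₀ + q, β₀ + p)` and to the diagonal point `(α₀ + p, β₀ + p)`. If `K` had an off-diagonal
element, it would thus contain `u = (α₀ + b, β₀ + a)` and `v = (α₀ + a, β₀ + b)` with `a < b`,
and `u v* u` lies in the row of `u` strictly to its right. Iterating, that row is unbounded, so
the diagonal of `K` is unbounded, contradicting its finiteness.
-/

open Set

section

variable {α₀ β₀ : ℤ}

lemma tri_base_swap_base {p q : ℤ} (hp : 0 ≤ p) (hq : 0 ≤ q) :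
    tri (α₀, β₀) (α₀ + p, β₀ + q) (α₀, β₀) = (α₀ + q, β₀ + p) := by
  simp only [tri, emul, estar, Prod.mk.injEq]
  omega

lemma tri_self_base {p q : ℤ} (hp : 0 ≤ p) :
    tri (α₀ + p, β₀ + q) (α₀ + p, β₀ + q) (α₀, β₀) = (α₀ + p, β₀ + p) := by
  simp only [tri, emul, estar, Prod.mk.injEq]
  omega

lemma tri_row {a b c : ℤ} (hab : a ≤ b) (hac : a ≤ c) :
    tri (α₀ + c, β₀ + a) (α₀ + a, β₀ + b) (α₀ + c, β₀ + a) = (α₀ + (2 * c + b - 2 * a), β₀ + a) := by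
  simp only [tri, emul, estar, Prod.mk.injEq]
  omega

namespace IsSubsemiheap

variable {K : Set (ℤ × ℤ)}

lemma mem_swap (hK : IsSubsemiheap K) (hmem : (α₀, β₀) ∈ K) {p q : ℤ} (hp : 0 ≤ p) (hq : 0 ≤ q)
    (hx : (α₀ + p, β₀ + q) ∈ K) : (α₀ + q, β₀ + p) ∈ K :=
  tri_base_swap_base hp hq ▸ hK _ hmem _ hx _ hmem

lemma mem_diag (hK : IsSubsemiheap K) (hmem : (α₀, β₀) ∈ K) {p q : ℤ} (hp : 0 ≤ p)
    (hx : (α₀ + p, β₀ + q) ∈ K) : (α₀ + p, β₀ + p) ∈ K :=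
  tri_self_base hp ▸ hK _ hx _ hx _ hmem

lemma not_bddAbove_row (hK : IsSubsemiheap K) {a b : ℤ} (hab : a < b)
    (hu : (α₀ + b, β₀ + a) ∈ K) (hv : (α₀ + a, β₀ + b) ∈ K) :
    ¬BddAbove {c | a ≤ c ∧ (α₀ + c, β₀ + a) ∈ K} := by
  intro hbdd
  obtain ⟨c, ⟨hac, hc⟩, hmax⟩ := Int.exists_greatest_of_bdd hbdd ⟨b, hab.le, hu⟩
  have hnext : (α₀ + (2 * c + b - 2 * a), β₀ + a) ∈ K :=
    tri_row hab.le hac ▸ hK _ hc _ hv _ hc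
  have := hmax _ ⟨by omega, hnext⟩
  omega

lemma eq_of_mem_of_bddAbove_diag (hK : IsSubsemiheap K) (hmem : (α₀, β₀) ∈ K)
    (hbdd : BddAbove {m | (α₀ + m, β₀ + m) ∈ K}) {p q : ℤ} (hp : 0 ≤ p) (hq : 0 ≤ q)
    (hx : (α₀ + p, β₀ + q) ∈ K) : p = q := by
  by_contra hne
  obtain ⟨a, b, ha, hab, hu, hv⟩ : ∃ a b : ℤ, 0 ≤ a ∧ a < b ∧
      (α₀ + b, β₀ + a) ∈ K ∧ (α₀ + a, β₀ + b) ∈ K := by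
    rcases lt_or_gt_of_ne hne with h | h
    · exact ⟨p, q, hp, h, hK.mem_swap hmem hp hq hx, hx⟩
    · exact ⟨q, p, hq, h, hx, hK.mem_swap hmem hp hq hx⟩
  refine hK.not_bddAbove_row hab hu hv (hbdd.mono ?_)
  rintro c ⟨hac, hc⟩
  exact hK.mem_diag hmem (ha.trans hac) hc

end IsSubsemiheap

end

theorem stmt14_general (K : Set (ℤ × ℤ)) (hK : IsSubsemiheap K) (α₀ β₀ : ℤ)
    (hsub : K ⊆ {x : ℤ × ℤ | α₀ ≤ x.1 ∧ β₀ ≤ x.2})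
    (hmem : ((α₀, β₀) : ℤ × ℤ) ∈ K)
    (n₀ : ℕ) (k : ℕ → ℤ) (hk1 : 1 ≤ k 1)
    (hkmono : ∀ j : ℕ, 1 ≤ j → j < n₀ → k j < k (j + 1))
    (hdiag : ∀ m : ℤ, 0 ≤ m →
      (((α₀ + m, β₀ + m) : ℤ × ℤ) ∈ K ↔
        m = 0 ∨ ∃ j : ℕ, 1 ≤ j ∧ j ≤ n₀ ∧ m = k j)) :
    K = {((α₀, β₀) : ℤ × ℤ)} ∪
        {x : ℤ × ℤ | ∃ j : ℕ, 1 ≤ j ∧ j ≤ n₀ ∧ x = (α₀ + k j, β₀ + k j)} := by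
  have hk_mono : MonotoneOn k (Icc 1 n₀) :=
    monotoneOn_of_le_succ ordConnected_Icc fun j _ hj hj' =>
      (hkmono j hj.1 (Order.succ_le_iff.1 hj'.2)).le
  have hbdd : BddAbove {m | (α₀ + m, β₀ + m) ∈ K} := by
    refine (((finite_Icc 1 n₀).image k).insert 0).bddAbove.mono fun m hm => ?_
    rcases (hdiag m (by linarith [(hsub hm).1])).1 hm with rfl | ⟨j, hj1, hjn, rfl⟩
    · exact mem_insert _ _
    · exact mem_insert_of_mem _ ⟨j, ⟨hj1, hjn⟩, rfl⟩
  ext ⟨x, y⟩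
  constructor
  · intro hxy
    obtain ⟨p, rfl⟩ : ∃ p, x = α₀ + p := ⟨x - α₀, by ring⟩
    obtain ⟨q, rfl⟩ : ∃ q, y = β₀ + q := ⟨y - β₀, by ring⟩
    obtain ⟨hp, hq⟩ : 0 ≤ p ∧ 0 ≤ q := by simpa using hsub hxy
    obtain rfl := hK.eq_of_mem_of_bddAbove_diag hmem hbdd hp hq hxy
    rcases (hdiag p hp).1 hxy with rfl | ⟨j, hj1, hjn, rfl⟩
    · left; simp
    · right; exact ⟨j, hj1, hjn, rfl⟩
  · rintro (h | ⟨j, hj1, hjn, h⟩)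
    · exact (mem_singleton_iff.1 h) ▸ hmem
    · have hkj : 1 ≤ k j := hk1.trans (hk_mono ⟨le_rfl, hj1.trans hjn⟩ ⟨hj1, hjn⟩ hj1)
      exact h ▸ (hdiag (k j) (by omega)).2 (Or.inr ⟨j, hj1, hjn, rfl⟩)

theorem stmt14 (K : Set (ℤ × ℤ)) (hK : IsSubsemiheap K) (α₀ β₀ : ℤ)
    (hsub : K ⊆ {x : ℤ × ℤ | α₀ ≤ x.1 ∧ β₀ ≤ x.2})
    (hmem : ((α₀, β₀) : ℤ × ℤ) ∈ K)
    (n₀ : ℕ) (k : ℕ → ℤ) (hk1 : 1 ≤ k 1)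
    (hkmono : ∀ j : ℕ, 1 ≤ j → j < n₀ → k j < k (j + 1))
    (hdiag : ∀ m : ℤ, 0 ≤ m →
      (((α₀ + m, β₀ + m) : ℤ × ℤ) ∈ K ↔
        m = 0 ∨ ∃ j : ℕ, 1 ≤ j ∧ j ≤ n₀ ∧ m = k j))
    (hrow : ∀ β : ℤ, β₀ < β → ((α₀, β) : ℤ × ℤ) ∉ K)
    (hcol : ∀ α : ℤ, α₀ < α → ((α, β₀) : ℤ × ℤ) ∉ K) :
    K = {((α₀, β₀) : ℤ × ℤ)} ∪
        {x : ℤ × ℤ | ∃ j : ℕ, 1 ≤ j ∧ j ≤ n₀ ∧ x = (α₀ + k j, β₀ + k j)} :=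
  stmt14_general K hK α₀ β₀ hsub hmem n₀ k hk1 hkmono hdiag
end

section
/- Let K be a subsemiheap of the extended bicyclic semigroup with K ⊆ K_{α₀,β₀} = {a_{pq} : p ≥ α₀, q ≥ β₀}, containing both a point a_{α₀β₀} on the corner and a point a_{α₀+r, β₀} with r ≥ 1 in the first column. Then K contains a_{α₀, β₀+r}; in particular, if no element a_{α₀β} with β > β₀ lies in K, then no element a_{αβ₀} with α > α₀ lies in K (Cases 1.2 and 1.3 do not occur). -/
/- `a_{αβ} a_{α+r,β}* = a_{α,α+r}`, and right multiplication by `a_{αβ}` then cancels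
`min (α + r) α = α`, which is where `0 ≤ r` is needed. -/
theorem tri_shift_fst_eq (α β r : ℤ) (hr : 0 ≤ r) :
    tri (α, β) (α + r, β) (α, β) = (α, β + r) := by
  simp only [tri, emul, estar]
  ext <;> simp only <;> omega

theorem IsSubsemiheap.mem_shift_snd {K : Set (ℤ × ℤ)} (hK : IsSubsemiheap K) {α β r : ℤ}
    (hr : 0 ≤ r) (hαβ : (α, β) ∈ K) (hshift : (α + r, β) ∈ K) : (α, β + r) ∈ K :=
  tri_shift_fst_eq α β r hr ▸ hK _ hαβ _ hshift _ hαβ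

theorem stmt15_general (K : Set (ℤ × ℤ)) (hK : IsSubsemiheap K) (α₀ β₀ : ℤ)
    (hmem : ((α₀, β₀) : ℤ × ℤ) ∈ K) :
    (∀ r : ℤ, 1 ≤ r → ((α₀ + r, β₀) : ℤ × ℤ) ∈ K → ((α₀, β₀ + r) : ℤ × ℤ) ∈ K) ∧
    ((∀ β : ℤ, β₀ < β → ((α₀, β) : ℤ × ℤ) ∉ K) →
      ∀ α : ℤ, α₀ < α → ((α, β₀) : ℤ × ℤ) ∉ K) := by
  have shift : ∀ r : ℤ, 1 ≤ r → ((α₀ + r, β₀) : ℤ × ℤ) ∈ K → ((α₀, β₀ + r) : ℤ × ℤ) ∈ K :=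
    fun r hr => hK.mem_shift_snd (by omega) hmem
  refine ⟨shift, fun hnone α hα hαK => ?_⟩
  have hαK' : ((α₀ + (α - α₀), β₀) : ℤ × ℤ) ∈ K := by rwa [add_sub_cancel]
  exact hnone _ (by omega) (shift (α - α₀) (by omega) hαK')

theorem stmt15 (K : Set (ℤ × ℤ)) (hK : IsSubsemiheap K) (α₀ β₀ : ℤ)
    (hsub : K ⊆ {x : ℤ × ℤ | α₀ ≤ x.1 ∧ β₀ ≤ x.2})
    (hmem : ((α₀, β₀) : ℤ × ℤ) ∈ K) :
    (∀ r : ℤ, 1 ≤ r → ((α₀ + r, β₀) : ℤ × ℤ) ∈ K → ((α₀, β₀ + r) : ℤ × ℤ) ∈ K) ∧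
    ((∀ β : ℤ, β₀ < β → ((α₀, β) : ℤ × ℤ) ∉ K) →
      ∀ α : ℤ, α₀ < α → ((α, β₀) : ℤ × ℤ) ∉ K) :=
  stmt15_general K hK α₀ β₀ hmem
end
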